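/- In the Standard Model finite spectral triple, the operator U := 1⊗1⊗1 + e_{11}⊗(e_{12}+e_{21}−1)⊗e_{11} ∈ M_4(ℂ)⊗M_2(ℂ)⊗M_4(ℂ) satisfies U = U*, U² = 1, U commutes with every element of the algebra A, and UJ = JU. -/

import Mathlib

open scoped ComplexConjugate
open Matrix

/-- The Hilbert space `H = M₄(ℂ) ⊕ M₄(ℂ)` of the finite Standard Model spectral triple,
with inner product `⟨(v,w),(v',w')⟩ = Tr(v*v') + Tr(w*w')`: it is realized as functions
on `Fin 2 × Fin 4 × Fin 4` (the first index `0`/`1` selecting `v`/`w`) with the standard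
inner product. -/
abbrev HSM := EuclideanSpace ℂ (Fin 2 × Fin 4 × Fin 4)

/-- The operator `π(α ⊗ e_{s't'} ⊗ β)` on `HSM`, sending the component `t` to the
component `s` via `u ↦ α u βᵗ` (here `s, t ∈ {0,1}` correspond to the `M₂(ℂ)` matrix unit
`e_{s+1,t+1}`). -/
noncomputable def opE (s t : Fin 2) (α β : Matrix (Fin 4) (Fin 4) ℂ) :
    HSM →ₗ[ℂ] HSM where
  toFun x := WithLp.toLp 2 (fun p : Fin 2 × Fin 4 × Fin 4 =>
    if p.1 = s then ∑ k, ∑ l, α p.2.1 k * β p.2.2 l * x (t, k, l) else 0)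
  map_add' x y := by
    ext p
    by_cases h : p.1 = s <;> simp [h, Finset.sum_add_distrib, mul_add]
  map_smul' c x := by
    ext p
    by_cases h : p.1 = s <;> simp [h, Finset.mul_sum]
    ring_nf
    simp [mul_assoc, mul_comm, mul_left_comm]

/-- The real structure `J(v,w) := (w*, v*)` on `HSM`. -/
noncomputable def JSM : HSM ≃ₛₗ[starRingEnd ℂ] HSM where
  toFun x := WithLp.toLp 2 (fun p : Fin 2 × Fin 4 × Fin 4 =>
    (starRingEnd ℂ) (x (1 - p.1, p.2.2, p.2.1)))
  invFun x := WithLp.toLp 2 (fun p : Fin 2 × Fin 4 × Fin 4 =>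
    (starRingEnd ℂ) (x (1 - p.1, p.2.2, p.2.1)))
  left_inv x := by
    ext p
    obtain ⟨s, i, j⟩ := p
    fin_cases s <;> simp
  right_inv x := by
    ext p
    obtain ⟨s, i, j⟩ := p
    fin_cases s <;> simp
  map_add' x y := by ext p; simp
  map_smul' c x := by ext p; simp

/-- For an antilinear isometry `J` and `ξ ∈ End(H)`, the operator `ξ° := J ξ* J⁻¹`. -/
noncomputable def sharp (J : HSM ≃ₛₗ[starRingEnd ℂ] HSM) (ξ : HSM →ₗ[ℂ] HSM) :
    HSM →ₗ[ℂ] HSM where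
  toFun x := J (star ξ (J.symm x))
  map_add' x y := by simp
  map_smul' c x := by
    show J (star ξ (J.symm (c • x))) = _
    rw [map_smulₛₗ, _root_.map_smul, map_smulₛₗ]; simp

/-- Conjugation `ξ ↦ J ξ J⁻¹` of an operator by the antilinear map `J`. -/
noncomputable def conjJ (J : HSM ≃ₛₗ[starRingEnd ℂ] HSM) (ξ : HSM →ₗ[ℂ] HSM) :
    HSM →ₗ[ℂ] HSM where
  toFun x := J (ξ (J.symm x))
  map_add' x y := by simp
  map_smul' c x := by
    show J (ξ (J.symm (c • x))) = _
    rw [map_smulₛₗ, _root_.map_smul, map_smulₛₗ]; simp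

/-- The commutant of a subset of `End(H)`. -/
def commutant (S : Set (HSM →ₗ[ℂ] HSM)) : Set (HSM →ₗ[ℂ] HSM) :=
  {η | ∀ ξ ∈ S, η * ξ = ξ * η}

/-- `B° := {J ξ* J⁻¹ : ξ ∈ B}`. -/
noncomputable def opp (S : Set (HSM →ₗ[ℂ] HSM)) : Set (HSM →ₗ[ℂ] HSM) :=
  sharp JSM '' S

/-- `Ω¹_D(A)`: the complex span of `{a[D,b] : a, b ∈ A}`. -/
noncomputable def omega1 (Aset : Set (HSM →ₗ[ℂ] HSM)) (D : HSM →ₗ[ℂ] HSM) :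
    Submodule ℂ (HSM →ₗ[ℂ] HSM) :=
  Submodule.span ℂ {x | ∃ a ∈ Aset, ∃ b ∈ Aset, x = a * (D * b - b * D)}

/-- `Cl_D(A)`: the complex `*`-subalgebra of `End(H)` generated by `A` and `Ω¹_D(A)`. -/
noncomputable def cliff (Aset : Set (HSM →ₗ[ℂ] HSM)) (D : HSM →ₗ[ℂ] HSM) :
    StarSubalgebra ℂ (HSM →ₗ[ℂ] HSM) :=
  StarAlgebra.adjoin ℂ (Aset ∪ (omega1 Aset D : Set (HSM →ₗ[ℂ] HSM)))

/-- The matrix unit `e₁₁ ∈ M₄(ℂ)`. -/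
noncomputable def E11 : Matrix (Fin 4) (Fin 4) ℂ :=
  !![1, 0, 0, 0; 0, 0, 0, 0; 0, 0, 0, 0; 0, 0, 0, 0]

/-- The matrix `diag(λ, λ̄) ⊕ q ∈ M₄(ℂ)`, where `q = [[a,b],[-b̄,ā]] ∈ ℍ ⊆ M₂(ℂ)`. -/
noncomputable def Mlq (l a b : ℂ) : Matrix (Fin 4) (Fin 4) ℂ :=
  !![l, 0, 0, 0;
     0, conj l, 0, 0;
     0, 0, a, b;
     0, 0, -(conj b), conj a]

/-- The matrix `λ ⊕ m ∈ M₄(ℂ)` with `m ∈ M₃(ℂ)`. -/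
noncomputable def Mlm (l : ℂ) (m : Matrix (Fin 3) (Fin 3) ℂ) : Matrix (Fin 4) (Fin 4) ℂ :=
  !![l, 0, 0, 0;
     0, m 0 0, m 0 1, m 0 2;
     0, m 1 0, m 1 1, m 1 2;
     0, m 2 0, m 2 1, m 2 2]

/-- The Standard Model algebra `A ≅ ℂ ⊕ ℍ ⊕ M₃(ℂ)`, acting on `HSM` as
`(diag(λ,λ̄) ⊕ q) ⊗ e₁₁ ⊗ 1 + (λ ⊕ m) ⊗ e₂₂ ⊗ 1`. -/
noncomputable def ASM : Set (HSM →ₗ[ℂ] HSM) :=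
  {ξ | ∃ (l a b : ℂ) (m : Matrix (Fin 3) (Fin 3) ℂ),
    ξ = opE 0 0 (Mlq l a b) 1 + opE 1 1 (Mlm l m) 1}

/-- The selfadjoint matrix `A_α ∈ M₄(ℂ)` with upper-right `2×2` block
`α = [[α₁₃,α₁₄],[α₂₃,α₂₄]]`, lower-left block `α*` and zero diagonal blocks. -/
noncomputable def Moff (x13 x14 x23 x24 : ℂ) : Matrix (Fin 4) (Fin 4) ℂ :=
  !![0, 0, x13, x14;
     0, 0, x23, x24;
     conj x13, conj x23, 0, 0;
     conj x14, conj x24, 0, 0]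

/-- The matrix `Δ ∈ M₄(ℂ)` with first row `(0,δ₁₂,δ₁₃,δ₁₄)`, second row
`(δ₂₁,δ₂₂,δ₂₃,δ₂₄)` and zero third and fourth rows. -/
noncomputable def Mdelta (d12 d13 d14 d21 d22 d23 d24 : ℂ) : Matrix (Fin 4) (Fin 4) ℂ :=
  !![0, d12, d13, d14;
     d21, d22, d23, d24;
     0, 0, 0, 0;
     0, 0, 0, 0]

/-- The component `D₀ = A_α ⊗ e₁₁ ⊗ e₁₁ + A_β ⊗ e₁₁ ⊗ (1 − e₁₁) + Δ ⊗ e₁₂ ⊗ e₁₁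
+ Δ* ⊗ e₂₁ ⊗ e₁₁` of the Dirac operator. -/
noncomputable def D0SM (a13 a14 a23 a24 b13 b14 b23 b24 d12 d13 d14 d21 d22 d23 d24 : ℂ) :
    HSM →ₗ[ℂ] HSM :=
  opE 0 0 (Moff a13 a14 a23 a24) E11
    + opE 0 0 (Moff b13 b14 b23 b24) (1 - E11)
    + opE 0 1 (Mdelta d12 d13 d14 d21 d22 d23 d24) E11
    + opE 1 0 (Mdelta d12 d13 d14 d21 d22 d23 d24)ᴴ E11

/-- The component `D_R = e₁₁ ⊗ (Υ_R e₂₁ + Ῡ_R e₁₂) ⊗ e₁₁` of the Dirac operator. -/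
noncomputable def DRSM (yR : ℂ) : HSM →ₗ[ℂ] HSM :=
  yR • opE 1 0 E11 E11 + (conj yR) • opE 0 1 E11 E11

/-- The full Dirac operator `D = D₀ + D₁ + D_R` with `D₁ = J D₀ J⁻¹`. -/
noncomputable def DSM
    (a13 a14 a23 a24 b13 b14 b23 b24 d12 d13 d14 d21 d22 d23 d24 yR : ℂ) :
    HSM →ₗ[ℂ] HSM :=
  D0SM a13 a14 a23 a24 b13 b14 b23 b24 d12 d13 d14 d21 d22 d23 d24
    + conjJ JSM (D0SM a13 a14 a23 a24 b13 b14 b23 b24 d12 d13 d14 d21 d22 d23 d24)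
    + DRSM yR

/-- The operator `U := 1⊗1⊗1 + e₁₁⊗(e₁₂+e₂₁−1)⊗e₁₁`. -/
noncomputable def USM : HSM →ₗ[ℂ] HSM :=
  1 + opE 0 1 E11 E11 + opE 1 0 E11 E11 - opE 0 0 E11 E11 - opE 1 1 E11 E11
/-!
`U` is the permutation operator of the transposition exchanging the `(1,1)` entries of `v` and
`w`, so it is a self-adjoint involution, and it commutes with `J` because the index map of `J`
exchanges those two entries as well. An element of `A` acts on their span as the scalar `λ`,
the common `(1,1)` entry of `diag(λ, λ̄) ⊕ q` and `λ ⊕ m`; hence it commutes with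
`U - 1 = e₁₁ ⊗ (e₁₂ + e₂₁ - 1) ⊗ e₁₁`, a computation in the matrix units.
-/

section CompOperator

variable {𝕜 ι : Type*} [RCLike 𝕜] {T : EuclideanSpace 𝕜 ι →ₗ[𝕜] EuclideanSpace 𝕜 ι}
  {σ : ι → ι}

lemma star_eq_self_of_apply_eq_comp [Fintype ι] (hσ : Function.Involutive σ)
    (hT : ∀ x p, T x p = x (σ p)) : star T = T := by
  rw [LinearMap.star_eq_adjoint]
  refine ((LinearMap.eq_adjoint_iff T T).mpr fun x y => ?_).symm
  simp only [PiLp.inner_apply, hT]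
  exact (Equiv.sum_comp hσ.toPerm _).symm.trans
    (Finset.sum_congr rfl fun p _ => by simp [hσ p])

lemma mul_self_eq_one_of_apply_eq_comp (hσ : Function.Involutive σ)
    (hT : ∀ x p, T x p = x (σ p)) : T * T = 1 := by
  ext x p
  simp [hT, hσ p]

end CompOperator

def component (x : HSM) (t : Fin 2) : Matrix (Fin 4) (Fin 4) ℂ := fun k l => x (t, k, l)

lemma opE_apply (s t : Fin 2) (α β : Matrix (Fin 4) (Fin 4) ℂ) (x : HSM) (r : Fin 2)
    (i j : Fin 4) :
    opE s t α β x (r, i, j) = if r = s then (α * component x t * βᵀ) i j else 0 := by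
  simp only [opE, LinearMap.coe_mk, AddHom.coe_mk, Matrix.mul_apply, Matrix.transpose_apply,
    component, Finset.sum_mul]
  split_ifs
  · rw [Finset.sum_comm]
    exact Finset.sum_congr rfl fun _ _ => Finset.sum_congr rfl fun _ _ => by ring
  · rfl

lemma opE_mul_opE (s t u : Fin 2) (α β α' β' : Matrix (Fin 4) (Fin 4) ℂ) :
    opE s t α β * opE t u α' β' = opE s u (α * α') (β * β') := by
  ext x ⟨r, i, j⟩
  have hcomp : component (opE t u α' β' x) t = α' * component x u * β'ᵀ := by
    ext k l
    simp [component, opE_apply]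
  simp only [Module.End.mul_apply, opE_apply, hcomp, Matrix.transpose_mul, Matrix.mul_assoc]

lemma opE_mul_opE_of_ne {s t t' u : Fin 2} (h : t ≠ t') (α β α' β' : Matrix (Fin 4) (Fin 4) ℂ) :
    opE s t α β * opE t' u α' β' = 0 := by
  ext x p
  simp [opE, h]

lemma opE_smul (s t : Fin 2) (c : ℂ) (α β : Matrix (Fin 4) (Fin 4) ℂ) :
    opE s t (c • α) β = c • opE s t α β := by
  ext x ⟨r, i, j⟩
  simp [opE_apply]

lemma E11_eq_single : E11 = Matrix.single 0 0 1 := by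
  ext i j
  fin_cases i <;> fin_cases j <;> rfl

lemma opE_E11_apply (s t : Fin 2) (x : HSM) (r : Fin 2) (i j : Fin 4) :
    opE s t E11 E11 x (r, i, j) = if r = s ∧ i = 0 ∧ j = 0 then x (t, 0, 0) else 0 := by
  rw [opE_apply, E11_eq_single, Matrix.transpose_single, Matrix.single_mul_mul_single]
  simp [Matrix.single, component, eq_comm, ite_and]

lemma USM_apply (x : HSM) (p : Fin 2 × Fin 4 × Fin 4) :
    USM x p = x (Equiv.swap (0, 0, 0) (1, 0, 0) p) := by
  obtain ⟨s, i, j⟩ := p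
  by_cases h : i = 0 ∧ j = 0
  · obtain ⟨rfl, rfl⟩ := h
    fin_cases s <;> simp [USM, opE_E11_apply]
  · fin_cases s <;> simp [USM, opE_E11_apply, h, Equiv.swap_apply_def]

def jIndex (p : Fin 2 × Fin 4 × Fin 4) : Fin 2 × Fin 4 × Fin 4 := (1 - p.1, p.2.2, p.2.1)

lemma JSM_apply (x : HSM) (p : Fin 2 × Fin 4 × Fin 4) : JSM x p = conj (x (jIndex p)) := rfl

lemma jIndex_involutive : Function.Involutive jIndex := fun ⟨s, i, j⟩ => by simp [jIndex]

lemma jIndex_swap (p : Fin 2 × Fin 4 × Fin 4) :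
    jIndex (Equiv.swap (0, 0, 0) (1, 0, 0) p) = Equiv.swap (0, 0, 0) (1, 0, 0) (jIndex p) := by
  rw [← jIndex_involutive.injective.swap_apply, Equiv.swap_comm]
  rfl

lemma E11_mul_Mlq (l a b : ℂ) : E11 * Mlq l a b = l • E11 := by
  ext i j
  fin_cases i <;> fin_cases j <;> simp [E11, Mlq, Matrix.mul_apply, Fin.sum_univ_four]

lemma Mlq_mul_E11 (l a b : ℂ) : Mlq l a b * E11 = l • E11 := by
  ext i j
  fin_cases i <;> fin_cases j <;> simp [E11, Mlq, Matrix.mul_apply, Fin.sum_univ_four]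

lemma E11_mul_Mlm (l : ℂ) (m : Matrix (Fin 3) (Fin 3) ℂ) : E11 * Mlm l m = l • E11 := by
  ext i j
  fin_cases i <;> fin_cases j <;> simp [E11, Mlm, Matrix.mul_apply, Fin.sum_univ_four]

lemma Mlm_mul_E11 (l : ℂ) (m : Matrix (Fin 3) (Fin 3) ℂ) : Mlm l m * E11 = l • E11 := by
  ext i j
  fin_cases i <;> fin_cases j <;> simp [E11, Mlm, Matrix.mul_apply, Fin.sum_univ_four]

noncomputable def USMcorner : HSM →ₗ[ℂ] HSM :=
  opE 0 1 E11 E11 + opE 1 0 E11 E11 - opE 0 0 E11 E11 - opE 1 1 E11 E11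

lemma USM_eq_one_add_corner : USM = 1 + USMcorner := by
  simp only [USM, USMcorner]
  abel

lemma USMcorner_mul_ASM (l a b : ℂ) (m : Matrix (Fin 3) (Fin 3) ℂ) :
    USMcorner * (opE 0 0 (Mlq l a b) 1 + opE 1 1 (Mlm l m) 1) = l • USMcorner := by
  simp only [USMcorner, mul_add, add_mul, sub_mul, opE_mul_opE, opE_mul_opE_of_ne, ne_eq,
    one_ne_zero, zero_ne_one, not_false_eq_true, E11_mul_Mlq, E11_mul_Mlm, mul_one, opE_smul,
    add_zero, zero_add, sub_zero]
  module

lemma ASM_mul_USMcorner (l a b : ℂ) (m : Matrix (Fin 3) (Fin 3) ℂ) :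
    (opE 0 0 (Mlq l a b) 1 + opE 1 1 (Mlm l m) 1) * USMcorner = l • USMcorner := by
  simp only [USMcorner, mul_add, add_mul, mul_sub, opE_mul_opE, opE_mul_opE_of_ne, ne_eq,
    one_ne_zero, zero_ne_one, not_false_eq_true, Mlq_mul_E11, Mlm_mul_E11, one_mul, opE_smul,
    add_zero, zero_add]
  module

/-- In the Standard Model finite spectral triple, the operator
`U = 1⊗1⊗1 + e₁₁⊗(e₁₂+e₂₁−1)⊗e₁₁` satisfies `U = U*`, `U² = 1`, `U` commutes with
every element of the algebra `A`, and `UJ = JU`. -/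
theorem USM_selfadjoint_involutive_commutes :
    star USM = USM ∧
    USM * USM = 1 ∧
    (∀ a ∈ ASM, USM * a = a * USM) ∧
    (∀ x, USM (JSM x) = JSM (USM x)) := by
  have hswap : Function.Involutive (Equiv.swap ((0, 0, 0) : Fin 2 × Fin 4 × Fin 4) (1, 0, 0)) :=
    Equiv.swap_apply_self _ _
  refine ⟨star_eq_self_of_apply_eq_comp hswap USM_apply,
    mul_self_eq_one_of_apply_eq_comp hswap USM_apply, ?_, fun x => ?_⟩
  · rintro _ ⟨l, a, b, m, rfl⟩
    rw [USM_eq_one_add_corner, add_mul 1 USMcorner, mul_add _ 1 USMcorner, USMcorner_mul_ASM,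
      ASM_mul_USMcorner, one_mul, mul_one]
  · ext p
    simp only [USM_apply, JSM_apply, jIndex_swap]
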